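/- Expression of D through the ribbon element (Proposition 1, part 1, eq. (2.28)): Assume in addition that R · τ(R) = τ(R) · R, that v ∈ A is an invertible central element with τ(R) · R = (v ⊗ v) · Δ(v)⁻¹ (ribbon relation), and that ι : A → V is a ℂ-algebra homomorphism satisfying the covariance property (1 ⊗ ι(x)) · Φ = Φ · ((id_A ⊗ ι)(Δᵒᵖ(x))) for all x ∈ A. Then Φ · (id_A ⊗ ι)(τ(R) · R) · Φ⁻¹ = (v ⊗ 1_V) · (Φ · (1 ⊗ ι(v)) · Φ⁻¹) · (1 ⊗ ι(v))⁻¹ in A ⊗ V. (In the paper's notation: D = v_a · σ(𝗏) · 𝗏⁻¹ with D := Φ N Φ⁻¹, N := (id ⊗ ι)(R'R).) -/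

import Mathlib

open scoped TensorProduct

noncomputable section

namespace Stmt5

variable (A V : Type*) [Ring A] [Bialgebra ℂ A] [Ring V] [Algebra ℂ V]

/-- Map units along a `ℂ`-algebra homomorphism. -/
def uMap {X Y : Type*} [Semiring X] [Semiring Y] [Algebra ℂ X] [Algebra ℂ Y] (f : X →ₐ[ℂ] Y) :
    Xˣ →* Yˣ :=
  Units.map (f : X →* Y)

/-- Embedding of `A ⊗ A` into `A ⊗ A ⊗ A` with legs in positions 1 and 2. -/
def a12 : A ⊗[ℂ] A →ₐ[ℂ] A ⊗[ℂ] (A ⊗[ℂ] A) :=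
  Algebra.TensorProduct.map (AlgHom.id ℂ A) Algebra.TensorProduct.includeLeft

/-- Embedding of `A ⊗ A` into `A ⊗ A ⊗ A` with legs in positions 1 and 3. -/
def a13 : A ⊗[ℂ] A →ₐ[ℂ] A ⊗[ℂ] (A ⊗[ℂ] A) :=
  Algebra.TensorProduct.map (AlgHom.id ℂ A) Algebra.TensorProduct.includeRight

/-- Embedding of `A ⊗ A` into `A ⊗ A ⊗ A` with legs in positions 2 and 3. -/
def a23 : A ⊗[ℂ] A →ₐ[ℂ] A ⊗[ℂ] (A ⊗[ℂ] A) :=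
  Algebra.TensorProduct.includeRight

/-- `Δ ⊗ id_A : A ⊗ A → A ⊗ A ⊗ A`. -/
def deltaIdA : A ⊗[ℂ] A →ₐ[ℂ] A ⊗[ℂ] (A ⊗[ℂ] A) :=
  (Algebra.TensorProduct.assoc ℂ ℂ ℂ A A A).toAlgHom.comp
    (Algebra.TensorProduct.map (Bialgebra.comulAlgHom ℂ A) (AlgHom.id ℂ A))

/-- `id_A ⊗ Δ : A ⊗ A → A ⊗ A ⊗ A`. -/
def idDeltaA : A ⊗[ℂ] A →ₐ[ℂ] A ⊗[ℂ] (A ⊗[ℂ] A) :=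
  Algebra.TensorProduct.map (AlgHom.id ℂ A) (Bialgebra.comulAlgHom ℂ A)

set_option maxHeartbeats 800000 in
/-- expression of `D` through the ribbon element:
`Φ · (id ⊗ ι)(τ(R)·R) · Φ⁻¹ = (v ⊗ 1) · (Φ · (1 ⊗ ι(v)) · Φ⁻¹) · (1 ⊗ ι(v))⁻¹` in `A ⊗ V`. -/
theorem D_through_ribbon (R : (A ⊗[ℂ] A)ˣ)
    (hR : ∀ a : A, (R : A ⊗[ℂ] A) * Bialgebra.comulAlgHom ℂ A a =
      Algebra.TensorProduct.comm ℂ A A (Bialgebra.comulAlgHom ℂ A a) * R)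
    (hR1 : deltaIdA A (R : A ⊗[ℂ] A) = a13 A (R : A ⊗[ℂ] A) * a23 A (R : A ⊗[ℂ] A))
    (hR2 : idDeltaA A (R : A ⊗[ℂ] A) = a13 A (R : A ⊗[ℂ] A) * a12 A (R : A ⊗[ℂ] A))
    (hRR' : (R : A ⊗[ℂ] A) * Algebra.TensorProduct.comm ℂ A A (R : A ⊗[ℂ] A) =
      Algebra.TensorProduct.comm ℂ A A (R : A ⊗[ℂ] A) * R)
    (v : Aˣ) (hvCentral : ∀ a : A, (v : A) * a = a * v)
    (hRibbon : Algebra.TensorProduct.comm ℂ A A (R : A ⊗[ℂ] A) * R =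
      ((v : A) ⊗ₜ[ℂ] (v : A)) *
        ((uMap (Bialgebra.comulAlgHom ℂ A) v)⁻¹ : (A ⊗[ℂ] A)ˣ))
    (ι : A →ₐ[ℂ] V) (Φ : (A ⊗[ℂ] V)ˣ)
    (hcov : ∀ x : A, ((1 : A) ⊗ₜ[ℂ] ι x) * (Φ : A ⊗[ℂ] V) =
      (Φ : A ⊗[ℂ] V) * Algebra.TensorProduct.map (AlgHom.id ℂ A) ι
        (Algebra.TensorProduct.comm ℂ A A (Bialgebra.comulAlgHom ℂ A x))) :
    (Φ : A ⊗[ℂ] V) *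
        Algebra.TensorProduct.map (AlgHom.id ℂ A) ι
          (Algebra.TensorProduct.comm ℂ A A (R : A ⊗[ℂ] A) * R) *
        ((Φ⁻¹ : (A ⊗[ℂ] V)ˣ) : A ⊗[ℂ] V) =
      ((v : A) ⊗ₜ[ℂ] (1 : V)) *
        ((Φ : A ⊗[ℂ] V) * ((1 : A) ⊗ₜ[ℂ] ι v) * ((Φ⁻¹ : (A ⊗[ℂ] V)ˣ) : A ⊗[ℂ] V)) *
        (((uMap (AlgHom.comp Algebra.TensorProduct.includeRight ι) v)⁻¹ :
          (A ⊗[ℂ] V)ˣ) : A ⊗[ℂ] V) := by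
  clear hR hR1 hR2
  set j := Algebra.TensorProduct.map (AlgHom.id ℂ A) ι with hjdef
  -- the "symmetry" of Δ(v⁻¹) coming from R τ(R) = τ(R) R and the ribbon relation
  have hDvinv : (((uMap (Bialgebra.comulAlgHom ℂ A) v)⁻¹ : (A ⊗[ℂ] A)ˣ) : A ⊗[ℂ] A)
      = Bialgebra.comulAlgHom ℂ A ((v⁻¹ : Aˣ) : A) := by
    simp [uMap, ← map_inv]
  have hsymm : Algebra.TensorProduct.comm ℂ A A
        (Bialgebra.comulAlgHom ℂ A ((v⁻¹ : Aˣ) : A))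
      = Bialgebra.comulAlgHom ℂ A ((v⁻¹ : Aˣ) : A) := by
    have h1 : Algebra.TensorProduct.comm ℂ A A
        (Algebra.TensorProduct.comm ℂ A A (R : A ⊗[ℂ] A) * R)
        = Algebra.TensorProduct.comm ℂ A A (R : A ⊗[ℂ] A) * R := by
      rw [map_mul]
      have h2 := (Algebra.TensorProduct.comm ℂ A A).symm_apply_apply (R : A ⊗[ℂ] A)
      rw [Algebra.TensorProduct.comm_symm] at h2
      rw [h2, hRR']
    rw [hRibbon, hDvinv, map_mul, Algebra.TensorProduct.comm_tmul] at h1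
    have hu : IsUnit (((v : A)) ⊗ₜ[ℂ] ((v : A)) : A ⊗[ℂ] A) := by
      refine ⟨uMap (Algebra.TensorProduct.includeLeft : A →ₐ[ℂ] A ⊗[ℂ] A) v *
        uMap (Algebra.TensorProduct.includeRight : A →ₐ[ℂ] A ⊗[ℂ] A) v, ?_⟩
      simp [uMap, Algebra.TensorProduct.tmul_mul_tmul]
    exact hu.mul_right_inj.mp h1
  -- units in A ⊗ V
  set U : (A ⊗[ℂ] V)ˣ := uMap (AlgHom.comp Algebra.TensorProduct.includeRight ι) v with hUdef
  set vA : (A ⊗[ℂ] V)ˣ :=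
    uMap (Algebra.TensorProduct.includeLeft : A →ₐ[ℂ] A ⊗[ℂ] V) v with hvAdef
  set g : A →ₐ[ℂ] A ⊗[ℂ] V :=
    j.comp ((Algebra.TensorProduct.comm ℂ A A).toAlgHom.comp (Bialgebra.comulAlgHom ℂ A))
    with hgdef
  set W : (A ⊗[ℂ] V)ˣ := uMap g v with hWdef
  have hUcoe : (U : A ⊗[ℂ] V) = (1 : A) ⊗ₜ[ℂ] ι v := by simp [hUdef, uMap]
  have hvAcoe : (vA : A ⊗[ℂ] V) = (v : A) ⊗ₜ[ℂ] (1 : V) := by simp [hvAdef, uMap]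
  have hWcoe : (W : A ⊗[ℂ] V) = j (Algebra.TensorProduct.comm ℂ A A
      (Bialgebra.comulAlgHom ℂ A (v : A))) := rfl
  have hWinvCoe : ((W⁻¹ : (A ⊗[ℂ] V)ˣ) : A ⊗[ℂ] V)
      = j (Algebra.TensorProduct.comm ℂ A A
          (Bialgebra.comulAlgHom ℂ A ((v⁻¹ : Aˣ) : A))) := by
    rw [← map_inv (uMap g) v]; rfl
  -- covariance as an identity of units
  have hUW : U * Φ = Φ * W := Units.ext (by
    simp only [Units.val_mul, hUcoe, hWcoe]
    exact hcov (v : A))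
  have hWinv : (W⁻¹ : (A ⊗[ℂ] V)ˣ) = Φ⁻¹ * U⁻¹ * Φ := by
    have h3 : Φ⁻¹ * (U * Φ) = W := by rw [hUW, inv_mul_cancel_left]
    rw [← h3]
    group
  -- centrality of v ⊗ 1
  have hvAc : ∀ x : A ⊗[ℂ] V, (vA : A ⊗[ℂ] V) * x = x * vA := by
    intro x
    induction x using TensorProduct.induction_on with
    | zero => simp
    | tmul a b =>
        simp only [hvAcoe, Algebra.TensorProduct.tmul_mul_tmul, one_mul, mul_one, hvCentral a]
    | add x y hx hy => rw [mul_add, add_mul, hx, hy]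
  have hvAcU : ∀ x : (A ⊗[ℂ] V)ˣ, vA * x = x * vA := fun x =>
    Units.ext (by simpa only [Units.val_mul] using hvAc (x : A ⊗[ℂ] V))
  -- the image of the ribbon element
  have hjRR : j (Algebra.TensorProduct.comm ℂ A A (R : A ⊗[ℂ] A) * R)
      = (vA : A ⊗[ℂ] V) * U * ((W⁻¹ : (A ⊗[ℂ] V)ˣ) : A ⊗[ℂ] V) := by
    rw [hRibbon, hDvinv, map_mul, ← hsymm, ← hWinvCoe]
    congr 1
    rw [hvAcoe, hUcoe, Algebra.TensorProduct.tmul_mul_tmul, mul_one, one_mul]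
    simp [hjdef]
  -- the main identity at the level of units
  have hfin : Φ * (vA * U * W⁻¹) * Φ⁻¹ = vA * (Φ * U * Φ⁻¹) * U⁻¹ := by
    rw [hWinv]
    simp only [mul_assoc, mul_inv_cancel, mul_one]
    rw [← mul_assoc, ← hvAcU Φ, mul_assoc]
  -- conclude
  rw [hjRR, ← hvAcoe, ← hUcoe]
  simpa only [Units.val_mul] using congrArg Units.val hfin

end Stmt5
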